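/- arXiv:1002.3572 — 6 statements merged into one kernel-verified Lean document; each statement's English description precedes it below -/
import Mathlib

section
/- Let x be a Nash equilibrium of the best shot game and let i be a vertex with x i = 0. Then i has at least one neighbor j with x j = 1, and after flipping x i to 1, the set of unsatisfied vertices is exactly the set of neighbors of i playing 1; moreover no two such unsatisfied vertices are adjacent to each other. -/
/-- A set of vertices is independent: no two of its members are adjacent. -/
def IsIndep {V : Type*} (G : SimpleGraph V) (S : Set V) : Prop :=
  ∀ ⦃a⦄, a ∈ S → ∀ ⦃b⦄, b ∈ S → ¬ G.Adj a b

/-- A set of vertices is dominating: every vertex outside has a neighbor inside. -/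
def IsDom {V : Type*} (G : SimpleGraph V) (S : Set V) : Prop :=
  ∀ v, v ∉ S → ∃ u ∈ S, G.Adj v u

/-- Nash equilibrium of the best shot game: a vertex plays 1 iff all its
neighbors play 0. -/
def BestShotNE {V : Type*} (G : SimpleGraph V) (x : V → Bool) : Prop :=
  ∀ i, x i = true ↔ ∀ j, G.Adj i j → x j = false

/-- A vertex `j` is unsatisfied in profile `y`: either it plays 0 and all its
neighbors play 0, or it plays 1 and some neighbor plays 1. -/
def Unsat {V : Type*} (G : SimpleGraph V) (y : V → Bool) (j : V) : Prop :=
  (y j = false ∧ ∀ k, G.Adj j k → y k = false) ∨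
  (y j = true ∧ ∃ k, G.Adj j k ∧ y k = true)

/-- One asynchronous best-response step: some unsatisfied vertex other than `i`
flips its action. -/
def Step {V : Type*} [DecidableEq V] (G : SimpleGraph V) (i : V)
    (y y' : V → Bool) : Prop :=
  ∃ j, j ≠ i ∧ Unsat G y j ∧ y' = Function.update y j (!y j)

/-- Flipping a 0-player `i` to 1 in a Nash equilibrium: `i` has a neighbor
playing 1; the unsatisfied vertices (other than `i`) are exactly the neighbors
of `i` playing 1; and no two of these are adjacent. -/
theorem unsat_after_flip_zero_to_one
    {V : Type*} [Fintype V] [DecidableEq V] (G : SimpleGraph V)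
    (x : V → Bool) (hx : BestShotNE G x) (i : V) (hi : x i = false) :
    (∃ j, G.Adj i j ∧ x j = true) ∧
    (∀ j, j ≠ i →
      (Unsat G (Function.update x i true) j ↔ (G.Adj i j ∧ x j = true))) ∧
    (∀ j k, G.Adj i j → x j = true → G.Adj i k → x k = true → ¬ G.Adj j k) := by

  have hne : ∃ j, G.Adj i j ∧ x j = true := by
    by_contra h
    push_neg at h
    have : x i = true := (hx i).mpr (fun j hj => by
      cases hxj : x j with
      | false => rfl
      | true => exact absurd hxj (h j hj))
    simp [hi] at this
  refine ⟨hne, ?_, ?_⟩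
  · intro j hj
    constructor
    · rintro (⟨h0, hall⟩ | ⟨h1, k, hk, hk1⟩)
      · rw [Function.update_of_ne hj] at h0
        -- x j = false, so j has a neighbor with x = true in NE
        have : ¬ (∀ k, G.Adj j k → x k = false) := by
          intro hall'
          have := (hx j).mpr hall'
          simp [h0] at this
        push_neg at this
        obtain ⟨k, hk, hk1⟩ := this
        have hkne : k ≠ i := by rintro rfl; exact hk1 hi
        have := hall k hk
        rw [Function.update_of_ne hkne] at this
        simp [this] at hk1
      · rw [Function.update_of_ne hj] at h1
        have hall := (hx j).mp h1
        by_cases hki : k = i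
        · subst hki
          exact ⟨hk.symm, h1⟩
        · rw [Function.update_of_ne hki] at hk1
          have := hall k hk
          simp [this] at hk1
    · rintro ⟨hadj, hj1⟩
      right
      rw [Function.update_of_ne hj]
      exact ⟨hj1, i, hadj.symm, Function.update_self i true x⟩
  · intro j k hij hj1 hik hk1 hjk
    have := (hx j).mp hj1 k hjk
    simp [this] at hk1
end

section
/- Let x be a Nash equilibrium, let i play 0, and consider the profile obtained by setting x i = 1 and then setting x j = 0 for every neighbor j of i that played 1, and then setting x k = 1 for every vertex k that played 0 and whose unique neighbor playing 1 was among those flipped j's and currently has all neighbors playing 0. Any profile reachable from x by this flip-and-best-respond process differs from x only on the set {i} ∪ N¹(i) ∪ N²(i), where N¹(i) and N²(i) denote first and second neighborhoods of i. -/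
/-- Any profile reachable from a Nash equilibrium by flipping a 0-player `i` to
1 and then running asynchronous best responses differs from the original
profile only on `{i} ∪ N¹(i) ∪ N²(i)`. -/
theorem best_response_changes_are_local
    {V : Type*} [Fintype V] [DecidableEq V] (G : SimpleGraph V)
    (x : V → Bool) (hx : BestShotNE G x) (i : V) (hi : x i = false) :
    ∀ y, Relation.ReflTransGen (Step G i) (Function.update x i true) y →
      ∀ v, y v ≠ x v →
        v = i ∨ G.Adj i v ∨ ∃ w, G.Adj i w ∧ G.Adj w v := by
  intro y hy
  suffices h : (∀ v, y v ≠ x v → v = i ∨ G.Adj i v ∨ ∃ w, G.Adj i w ∧ G.Adj w v) ∧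
      (∀ v, v ≠ i → ¬ G.Adj i v → x v = true →
        y v = true ∧ ∀ w, G.Adj v w → y w = false) from h.1
  induction hy with
  | refl =>
    constructor
    · intro v hv
      by_cases hvi : v = i
      · exact Or.inl hvi
      · exact absurd (Function.update_of_ne hvi true x) hv
    · intro v hvi hvadj hxv
      constructor
      · rw [Function.update_of_ne hvi]; exact hxv
      · intro w hw
        have hwi : w ≠ i := fun h => hvadj ((h ▸ hw).symm)
        rw [Function.update_of_ne hwi]
        exact (hx v).mp hxv w hw
  | @tail b c hab hstep ih =>
    obtain ⟨hD, hC⟩ := ih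
    obtain ⟨j, hji, hunsat, rfl⟩ := hstep
    constructor
    · intro v hv
      by_cases hvj : v = j
      · subst hvj
        by_contra h
        push_neg at h
        obtain ⟨h1, h2, h3⟩ := h
        have hbv : b v = x v := by
          by_contra hne
          rcases hD v hne with h | h | ⟨w, hw1, hw2⟩
          · exact h1 h
          · exact h2 h
          · exact h3 w hw1 hw2
        cases hxv : x v with
        | true =>
          obtain ⟨hyv, hnb⟩ := hC v h1 h2 hxv
          rcases hunsat with ⟨hf, _⟩ | ⟨_, k, hk, hbk⟩
          · rw [hyv] at hf; exact Bool.noConfusion hf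
          · rw [hnb k hk] at hbk; exact Bool.noConfusion hbk
        | false =>
          have hex : ∃ u, G.Adj v u ∧ x u = true := by
            by_contra h'
            push_neg at h'
            have : x v = true := (hx v).mpr fun u hu => by
              have := h' u hu
              exact Bool.not_eq_true (x u) ▸ this
            rw [hxv] at this; exact Bool.noConfusion this
          obtain ⟨u, hu1, hu2⟩ := hex
          have hui : u ≠ i := fun h => h2 (h ▸ hu1).symm
          have huadj : ¬ G.Adj i u := fun h => h3 u h hu1.symm
          obtain ⟨hyu, _⟩ := hC u hui huadj hu2
          rcases hunsat with ⟨_, hall⟩ | ⟨ht, _⟩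
          · rw [hall u hu1] at hyu; exact Bool.noConfusion hyu
          · rw [hbv, hxv] at ht; exact Bool.noConfusion ht
      · rw [Function.update_of_ne hvj] at hv
        exact hD v hv
    · intro v hvi hvadj hxv
      obtain ⟨hyv, hnb⟩ := hC v hvi hvadj hxv
      have hjv : j ≠ v := by
        intro h
        subst h
        rcases hunsat with ⟨hf, _⟩ | ⟨_, k, hk, hbk⟩
        · rw [hyv] at hf; exact Bool.noConfusion hf
        · rw [hnb k hk] at hbk; exact Bool.noConfusion hbk
      constructor
      · rw [Function.update_of_ne hjv.symm]; exact hyv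
      · intro w hw
        by_cases hjw : j = w
        · subst hjw
          exfalso
          rcases hunsat with ⟨_, hall⟩ | ⟨ht, _⟩
          · rw [hall v hw.symm] at hyv; exact Bool.noConfusion hyv
          · rw [hnb j hw] at ht; exact Bool.noConfusion ht
        · rw [Function.update_of_ne (Ne.symm hjw)]
          exact hnb w hw
end

section
/- Starting from a Nash equilibrium x of the best shot game and flipping the action of a single vertex i from 0 to 1, every sequence of asynchronous best responses (repeatedly flipping an unsatisfied vertex other than i) terminates in at most |N¹(i) ∪ N²(i)| steps at a new Nash equilibrium x' with x' i = 1 and x' ≠ x. -/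
/-- Invariant maintained along best-response sequences. -/
def BRInv {V : Type*} (G : SimpleGraph V) (x : V → Bool) (i : V)
    (y : V → Bool) : Prop :=
  y i = true ∧
  (∀ v, G.Adj i v → x v = false → y v = false) ∧
  (∀ v, v ≠ i → ¬ G.Adj i v → y v = true → ∀ w, G.Adj v w → y w = false) ∧
  (∀ v, v ≠ i → ¬ G.Adj i v → x v = true → y v = true)

/-- Potential function. -/
noncomputable def BRPhi {V : Type*} (G : SimpleGraph V) (i : V)
    (y : V → Bool) : ℕ :=
  ({v | G.Adj i v ∧ y v = true}).ncard +
  ({v | (v ≠ i ∧ ¬ G.Adj i v ∧ ∃ w, G.Adj i w ∧ G.Adj w v) ∧ y v = false}).ncard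

lemma br_init {V : Type*} [DecidableEq V] (G : SimpleGraph V)
    {x : V → Bool} (hx : BestShotNE G x) {i : V} :
    BRInv G x i (Function.update x i true) := by
  refine ⟨Function.update_self i true x, ?_, ?_, ?_⟩
  · intro v hv hxv
    rw [Function.update_of_ne (G.ne_of_adj hv.symm)]
    exact hxv
  · intro v hvi hniv hyv w hvw
    rw [Function.update_of_ne hvi] at hyv
    have hw : w ≠ i := by rintro rfl; exact hniv hvw.symm
    rw [Function.update_of_ne hw]
    exact (hx v).mp hyv w hvw
  · intro v hvi _ hxv
    rw [Function.update_of_ne hvi]; exact hxv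

lemma br_step {V : Type*} [Fintype V] [DecidableEq V] (G : SimpleGraph V)
    {x : V → Bool} (hx : BestShotNE G x) {i : V} (hi : x i = false)
    {y y' : V → Bool} (hInv : BRInv G x i y) (hs : Step G i y y') :
    BRInv G x i y' ∧ BRPhi G i y = BRPhi G i y' + 1 := by
  obtain ⟨hA, hB, hC, hD⟩ := hInv
  obtain ⟨j, hji, hU, rfl⟩ := hs
  rcases hU with ⟨hj0, hnb⟩ | ⟨hj1, k, hjk, hk1⟩
  · -- j plays 0, all its neighbors play 0; j flips to 1
    have hnadj : ¬ G.Adj i j := by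
      intro h
      have := hnb i h.symm
      rw [hA] at this; exact Bool.noConfusion this
    have hxj : x j = false := by
      cases hxj : x j with
      | false => rfl
      | true =>
        have := hD j hji hnadj hxj
        rw [hj0] at this; exact Bool.noConfusion this
    have hex : ∃ u, G.Adj j u ∧ x u = true := by
      by_contra hno
      push_neg at hno
      have : x j = true := (hx j).mpr (fun w hw => by
        cases hxw : x w with
        | false => rfl
        | true => exact absurd hxw (hno w hw))
      rw [hxj] at this; exact Bool.noConfusion this
    obtain ⟨u, hju, hxu⟩ := hex
    have hui : u ≠ i := by rintro rfl; rw [hi] at hxu; exact Bool.noConfusion hxu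
    have hiu : G.Adj i u := by
      by_contra h
      have := hD u hui h hxu
      rw [hnb u hju] at this; exact Bool.noConfusion this
    have hjN2 : j ≠ i ∧ ¬ G.Adj i j ∧ ∃ w, G.Adj i w ∧ G.Adj w j :=
      ⟨hji, hnadj, u, hiu, hju.symm⟩
    have hyj' : Function.update y j (!y j) j = true := by
      rw [Function.update_self, hj0]; rfl
    constructor
    · refine ⟨?_, ?_, ?_, ?_⟩
      · rw [Function.update_of_ne (Ne.symm hji)]; exact hA
      · intro v hv hxv
        have hvj : v ≠ j := by rintro rfl; exact hnadj hv
        rw [Function.update_of_ne hvj]; exact hB v hv hxv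
      · intro v hvi hniv hyv w hvw
        by_cases hvj : v = j
        · subst hvj
          have hwj : w ≠ v := fun h => G.irrefl (h ▸ hvw)
          rw [Function.update_of_ne hwj]
          exact hnb w hvw
        · rw [Function.update_of_ne hvj] at hyv
          have hwj : w ≠ j := by
            rintro rfl
            have := hnb v hvw.symm
            rw [hyv] at this; exact Bool.noConfusion this
          rw [Function.update_of_ne hwj]
          exact hC v hvi hniv hyv w hvw
      · intro v hvi hniv hxv
        by_cases hvj : v = j
        · subst hvj; exact hyj'
        · rw [Function.update_of_ne hvj]; exact hD v hvi hniv hxv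
    · -- potential
      have h1 : {v | G.Adj i v ∧ Function.update y j (!y j) v = true}
          = {v | G.Adj i v ∧ y v = true} := by
        ext v
        by_cases hvj : v = j
        · subst hvj
          simp only [Set.mem_setOf_eq]
          exact ⟨fun h => absurd h.1 hnadj, fun h => absurd h.1 hnadj⟩
        · simp only [Set.mem_setOf_eq, Function.update_of_ne hvj]
      have h2 : {v | (v ≠ i ∧ ¬ G.Adj i v ∧ ∃ w, G.Adj i w ∧ G.Adj w v) ∧ y v = false}
          = insert j {v | (v ≠ i ∧ ¬ G.Adj i v ∧ ∃ w, G.Adj i w ∧ G.Adj w v) ∧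
              Function.update y j (!y j) v = false} := by
        ext v
        by_cases hvj : v = j
        · subst hvj
          refine ⟨fun _ => Set.mem_insert _ _, fun _ => ⟨hjN2, hj0⟩⟩
        · simp only [Set.mem_insert_iff, Set.mem_setOf_eq,
            Function.update_of_ne hvj, hvj, false_or]
      have hjnot : j ∉ {v | (v ≠ i ∧ ¬ G.Adj i v ∧ ∃ w, G.Adj i w ∧ G.Adj w v) ∧
          Function.update y j (!y j) v = false} := by
        intro h
        simp only [Set.mem_setOf_eq] at h
        rw [hyj'] at h
        exact Bool.noConfusion h.2
      unfold BRPhi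
      rw [h1, h2, Set.ncard_insert_of_notMem hjnot (Set.toFinite _)]
      ring
  · -- j plays 1 with a neighbor playing 1; j flips to 0
    have hij : G.Adj i j := by
      by_contra h
      have := hC j hji h hj1 k hjk
      rw [hk1] at this; exact Bool.noConfusion this
    have hyj' : Function.update y j (!y j) j = false := by
      rw [Function.update_self, hj1]; rfl
    constructor
    · refine ⟨?_, ?_, ?_, ?_⟩
      · rw [Function.update_of_ne (Ne.symm hji)]; exact hA
      · intro v hv hxv
        by_cases hvj : v = j
        · subst hvj; exact hyj'
        · rw [Function.update_of_ne hvj]; exact hB v hv hxv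
      · intro v hvi hniv hyv w hvw
        have hvj : v ≠ j := by rintro rfl; exact hniv hij
        rw [Function.update_of_ne hvj] at hyv
        by_cases hwj : w = j
        · subst hwj; exact hyj'
        · rw [Function.update_of_ne hwj]; exact hC v hvi hniv hyv w hvw
      · intro v hvi hniv hxv
        have hvj : v ≠ j := by rintro rfl; exact hniv hij
        rw [Function.update_of_ne hvj]; exact hD v hvi hniv hxv
    · have h2 : {v | (v ≠ i ∧ ¬ G.Adj i v ∧ ∃ w, G.Adj i w ∧ G.Adj w v) ∧
            Function.update y j (!y j) v = false}
          = {v | (v ≠ i ∧ ¬ G.Adj i v ∧ ∃ w, G.Adj i w ∧ G.Adj w v) ∧ y v = false} := by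
        ext v
        by_cases hvj : v = j
        · subst hvj
          simp only [Set.mem_setOf_eq]
          exact ⟨fun h => absurd hij h.1.2.1, fun h => absurd hij h.1.2.1⟩
        · simp only [Set.mem_setOf_eq, Function.update_of_ne hvj]
      have h1 : {v | G.Adj i v ∧ y v = true}
          = insert j {v | G.Adj i v ∧ Function.update y j (!y j) v = true} := by
        ext v
        by_cases hvj : v = j
        · subst hvj
          refine ⟨fun _ => Set.mem_insert _ _, fun _ => ⟨hij, hj1⟩⟩
        · simp only [Set.mem_insert_iff, Set.mem_setOf_eq,
            Function.update_of_ne hvj, hvj, false_or]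
      have hjnot : j ∉ {v | G.Adj i v ∧ Function.update y j (!y j) v = true} := by
        intro h
        simp only [Set.mem_setOf_eq] at h
        rw [hyj'] at h
        exact Bool.noConfusion h.2
      unfold BRPhi
      rw [h1, h2, Set.ncard_insert_of_notMem hjnot (Set.toFinite _)]
      ring

/-- Starting from a Nash equilibrium and flipping vertex `i` from 0 to 1, every
sequence of asynchronous best responses terminates in at most
`|N¹(i) ∪ N²(i)|` steps at a new Nash equilibrium `x'` with `x' i = 1` and
`x' ≠ x`. -/
theorem best_response_terminates
    {V : Type*} [Fintype V] [DecidableEq V] (G : SimpleGraph V)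
    (x : V → Bool) (hx : BestShotNE G x) (i : V) (hi : x i = false) :
    (∀ (n : ℕ) (f : ℕ → V → Bool), f 0 = Function.update x i true →
        (∀ k < n, Step G i (f k) (f (k + 1))) →
        n ≤ ({v | G.Adj i v} ∪
              {v | v ≠ i ∧ ¬ G.Adj i v ∧ ∃ w, G.Adj i w ∧ G.Adj w v}).ncard) ∧
    (∀ y, Relation.ReflTransGen (Step G i) (Function.update x i true) y →
        (∀ j, j ≠ i → ¬ Unsat G y j) →
        BestShotNE G y ∧ y i = true ∧ y ≠ x) := by
  constructor
  · intro n f h0 hstep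
    have key : ∀ k, k ≤ n → BRInv G x i (f k) ∧ BRPhi G i (f 0) = BRPhi G i (f k) + k := by
      intro k
      induction k with
      | zero => intro _; exact ⟨h0 ▸ br_init G hx, rfl⟩
      | succ k ih =>
        intro hk
        obtain ⟨hInv, hPhi⟩ := ih (Nat.le_of_succ_le hk)
        obtain ⟨hInv', hPhi'⟩ := br_step G hx hi hInv (hstep k hk)
        exact ⟨hInv', by omega⟩
    obtain ⟨_, hPhi⟩ := key n le_rfl
    have hle : n ≤ BRPhi G i (f 0) := by omega
    have hb1 : ({v | G.Adj i v ∧ f 0 v = true}).ncard ≤ ({v | G.Adj i v} : Set V).ncard :=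
      Set.ncard_le_ncard (fun v hv => hv.1) (Set.toFinite _)
    have hb2 : ({v | (v ≠ i ∧ ¬ G.Adj i v ∧ ∃ w, G.Adj i w ∧ G.Adj w v) ∧
          f 0 v = false}).ncard ≤
        ({v | v ≠ i ∧ ¬ G.Adj i v ∧ ∃ w, G.Adj i w ∧ G.Adj w v} : Set V).ncard :=
      Set.ncard_le_ncard (fun v hv => hv.1) (Set.toFinite _)
    have hdisj : Disjoint ({v | G.Adj i v} : Set V)
        {v | v ≠ i ∧ ¬ G.Adj i v ∧ ∃ w, G.Adj i w ∧ G.Adj w v} := by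
      rw [Set.disjoint_left]
      intro v hv hv2
      exact hv2.2.1 hv
    have hunion : ({v | G.Adj i v} ∪
          {v | v ≠ i ∧ ¬ G.Adj i v ∧ ∃ w, G.Adj i w ∧ G.Adj w v} : Set V).ncard
        = ({v | G.Adj i v} : Set V).ncard +
          ({v | v ≠ i ∧ ¬ G.Adj i v ∧ ∃ w, G.Adj i w ∧ G.Adj w v} : Set V).ncard :=
      Set.ncard_union_eq hdisj (Set.toFinite _) (Set.toFinite _)
    unfold BRPhi at hle
    omega
  · intro y hreach hns
    have hInv : BRInv G x i y := by
      clear hns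
      induction hreach with
      | refl => exact br_init G hx
      | tail _ hs ih => exact (br_step G hx hi ih hs).1
    obtain ⟨hA, _, _, _⟩ := hInv
    refine ⟨?_, hA, ?_⟩
    · intro v
      by_cases hv : v = i
      · subst hv
        constructor
        · intro _ w hvw
          by_contra hw
          have hw' : y w = true := by
            cases hyw : y w with
            | false => exact absurd hyw hw
            | true => rfl
          exact hns w (G.ne_of_adj hvw.symm) (Or.inr ⟨hw', v, hvw.symm, hA⟩)
        · intro _; exact hA
      · have hnu := hns v hv
        constructor
        · intro hv1 w hvw
          by_contra hw
          have hw' : y w = true := by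
            cases hyw : y w with
            | false => exact absurd hyw hw
            | true => rfl
          exact hnu (Or.inr ⟨hv1, w, hvw, hw'⟩)
        · intro hall
          by_contra h
          have h' : y v = false := by
            cases hyv : y v with
            | false => rfl
            | true => exact absurd hyv h
          exact hnu (Or.inl ⟨h', hall⟩)
    · intro h
      rw [h, hi] at hA
      exact Bool.noConfusion hA
end

section
/- For any two Nash equilibria x and x' of the best shot game on a finite graph, there is a finite sequence x = x⁰, x¹, …, xⁿ = x' of Nash equilibria such that each x^{k+1} is reachable from x^k by flipping from 0 to 1 a single vertex i with x^k i = 0 and x' i = 1, followed by best response dynamics; moreover the vertices in S' = {v : x' v = 1} that have been switched on are never switched off in subsequent steps. -/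
lemma offPath {V : Type*} [DecidableEq V] (G : SimpleGraph V) (i : V) :
    ∀ (L : List V) (y : V → Bool), L.Nodup →
    (∀ j ∈ L, G.Adj i j ∧ y j = true) → y i = true →
    Relation.ReflTransGen (Step G i) y (fun v => if v ∈ L then false else y v) := by
  intro L
  induction L with
  | nil => intro y _ _ _; simpa using Relation.ReflTransGen.refl
  | cons j L ih =>
    intro y hnd hL hyi
    have hadj : G.Adj i j := (hL j (by simp)).1
    have hyj : y j = true := (hL j (by simp)).2
    have hji : j ≠ i := fun h => G.irrefl (h ▸ hadj)
    have hjL : j ∉ L := (List.nodup_cons.mp hnd).1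
    set y1 := Function.update y j (!y j) with hy1
    have hstep : Step G i y y1 := ⟨j, hji, Or.inr ⟨hyj, i, hadj.symm, hyi⟩, rfl⟩
    have hy1j : y1 j = false := by simp [hy1, hyj]
    have hy1ne : ∀ v, v ≠ j → y1 v = y v := fun v hv => Function.update_of_ne hv _ _
    have htail := ih y1 (List.nodup_cons.mp hnd).2
      (fun k hk => ⟨(hL k (by simp [hk])).1,
        by rw [hy1ne k (fun h => hjL (h ▸ hk))]; exact (hL k (by simp [hk])).2⟩)
      (by rw [hy1ne i hji.symm]; exact hyi)
    have hfun : (fun v => if v ∈ L then false else y1 v)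
        = (fun v => if v ∈ j :: L then false else y v) := by
      funext v
      by_cases hvj : v = j
      · subst hvj; simp [hjL, hy1j]
      · by_cases hvL : v ∈ L <;> simp [hvL, hvj, hy1ne v hvj]
    exact Relation.ReflTransGen.head hstep (hfun ▸ htail)

lemma onPath {V : Type*} [DecidableEq V] (G : SimpleGraph V) (i : V) :
    ∀ (L : List V) (y : V → Bool), L.Nodup →
    (∀ j ∈ L, j ≠ i ∧ y j = false ∧ ∀ k, G.Adj j k → y k = false ∧ k ∉ L) →
    Relation.ReflTransGen (Step G i) y (fun v => if v ∈ L then true else y v) := by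
  intro L
  induction L with
  | nil => intro y _ _; simpa using Relation.ReflTransGen.refl
  | cons j L ih =>
    intro y hnd hL
    obtain ⟨hji, hyj, hnb⟩ := hL j (by simp)
    have hjL : j ∉ L := (List.nodup_cons.mp hnd).1
    set y1 := Function.update y j (!y j) with hy1
    have hstep : Step G i y y1 := ⟨j, hji, Or.inl ⟨hyj, fun k hk => (hnb k hk).1⟩, rfl⟩
    have hy1j : y1 j = true := by simp [hy1, hyj]
    have hy1ne : ∀ v, v ≠ j → y1 v = y v := fun v hv => Function.update_of_ne hv _ _
    have htail := ih y1 (List.nodup_cons.mp hnd).2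
      (fun m hm => by
        obtain ⟨hmi, hym, hmn⟩ := hL m (by simp [hm])
        refine ⟨hmi, by rw [hy1ne m (fun h => hjL (h ▸ hm))]; exact hym, fun k hk => ?_⟩
        obtain ⟨hk1, hk2⟩ := hmn k hk
        have hkj : k ≠ j := fun h => hk2 (by simp [h])
        exact ⟨by rw [hy1ne k hkj]; exact hk1, fun hkL => hk2 (by simp [hkL])⟩)
    have hfun : (fun v => if v ∈ L then true else y1 v)
        = (fun v => if v ∈ j :: L then true else y v) := by
      funext v
      by_cases hvj : v = j
      · subst hvj; simp [hjL, hy1j]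
      · by_cases hvL : v ∈ L <;> simp [hvL, hvj, hy1ne v hvj]
    exact Relation.ReflTransGen.head hstep (hfun ▸ htail)

lemma exists_maximal_indep {V : Type*} [Fintype V] [DecidableEq V] (G : SimpleGraph V)
    (B : Finset V) (hB : ∀ a ∈ B, ∀ b ∈ B, ¬ G.Adj a b) :
    ∃ M : Finset V, B ⊆ M ∧ (∀ a ∈ M, ∀ b ∈ M, ¬ G.Adj a b) ∧
      ∀ v, v ∉ M → ∃ u ∈ M, G.Adj v u := by
  classical
  let 𝒮 : Finset (Finset V) :=
    Finset.univ.filter (fun M => B ⊆ M ∧ ∀ a ∈ M, ∀ b ∈ M, ¬ G.Adj a b)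
  have hBS : B ∈ 𝒮 := by simp [𝒮]; exact hB
  obtain ⟨M, hM, hmax⟩ := Finset.exists_max_image 𝒮 Finset.card ⟨B, hBS⟩
  simp only [𝒮, Finset.mem_filter, Finset.mem_univ, true_and] at hM
  refine ⟨M, hM.1, hM.2, fun v hv => ?_⟩
  by_contra hno
  push_neg at hno
  have hind : ∀ a ∈ insert v M, ∀ b ∈ insert v M, ¬ G.Adj a b := by
    intro a ha b hb hab
    simp only [Finset.mem_insert] at ha hb
    rcases ha with rfl | ha <;> rcases hb with rfl | hb
    · exact G.irrefl hab
    · exact hno b hb hab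
    · exact hno a ha hab.symm
    · exact hM.2 a ha b hb hab
  have hmem : insert v M ∈ 𝒮 := by
    simp only [𝒮, Finset.mem_filter, Finset.mem_univ, true_and]
    exact ⟨hM.1.trans (Finset.subset_insert _ _), hind⟩
  have := hmax _ hmem
  rw [Finset.card_insert_of_notMem hv] at this
  omega

lemma keyStep {V : Type*} [Fintype V] [DecidableEq V] (G : SimpleGraph V)
    (x x' : V → Bool) (hx : BestShotNE G x) (hx' : BestShotNE G x')
    (i : V) (hxi : x i = false) (hx'i : x' i = true) :
    ∃ x₁ : V → Bool, BestShotNE G x₁ ∧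
      Relation.ReflTransGen (Step G i) (Function.update x i true) x₁ ∧
      (∀ v, x' v = true → x v = true → x₁ v = true) ∧ x₁ i = true ∧
      (Finset.univ.filter (fun v => x' v = true ∧ x₁ v = false)).card <
        (Finset.univ.filter (fun v => x' v = true ∧ x v = false)).card := by
  classical
  -- no neighbor of i is a 1-player of x'
  have hNi : ∀ v, G.Adj i v → x' v = false := (hx' i).mp hx'i
  set S : Finset V := Finset.univ.filter (fun v => x v = true) with hS
  have hSmem : ∀ v, v ∈ S ↔ x v = true := by intro v; simp [hS]
  set B : Finset V := insert i (S.filter (fun v => ¬ G.Adj i v)) with hBdef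
  have hiB : i ∈ B := Finset.mem_insert_self _ _
  have hBmem : ∀ v, v ∈ B ↔ v = i ∨ (x v = true ∧ ¬ G.Adj i v) := by
    intro v; simp [hBdef, hSmem, and_comm]
  have hBind : ∀ a ∈ B, ∀ b ∈ B, ¬ G.Adj a b := by
    intro a ha b hb hab
    rw [hBmem] at ha hb
    rcases ha with rfl | ⟨hax, hai⟩ <;> rcases hb with rfl | ⟨hbx, hbi⟩
    · exact G.irrefl hab
    · exact hbi hab
    · exact hai hab.symm
    · exact absurd ((hx a).mp hax b hab) (by simp [hbx])
  obtain ⟨M, hBM, hMind, hMdom⟩ := exists_maximal_indep G B hBind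
  set x₁ : V → Bool := fun v => decide (v ∈ M) with hx₁def
  have hx₁mem : ∀ v, x₁ v = true ↔ v ∈ M := by intro v; simp [hx₁def]
  have hx₁false : ∀ v, x₁ v = false ↔ v ∉ M := by intro v; simp [hx₁def]
  have hBsub : ∀ v ∈ B, x₁ v = true := fun v hv => (hx₁mem v).mpr (hBM hv)
  refine ⟨x₁, ?_, ?_, ?_, hBsub i hiB, ?_⟩
  · -- Nash equilibrium
    intro v
    constructor
    · intro hv j hadj
      rw [hx₁mem] at hv
      rw [hx₁false]
      exact fun hj => hMind v hv j hj hadj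
    · intro hall
      rw [hx₁mem]
      by_contra hv
      obtain ⟨u, hu, hadj⟩ := hMdom v hv
      have := hall u hadj
      rw [hx₁false] at this
      exact this hu
  · -- the path
    set y0 : V → Bool := Function.update x i true with hy0
    have hy0i : y0 i = true := Function.update_self _ _ _
    have hy0ne : ∀ v, v ≠ i → y0 v = x v := fun v hv => Function.update_of_ne hv _ _
    set L1 : List V := (S.filter (fun v => G.Adj i v)).toList with hL1
    have hL1mem : ∀ v, v ∈ L1 ↔ x v = true ∧ G.Adj i v := by
      intro v; simp [hL1, hSmem, Finset.mem_toList, Finset.mem_filter, hS]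
    have path1 := offPath G i L1 y0 (Finset.nodup_toList _)
      (fun j hj => by
        rw [hL1mem] at hj
        have hji : j ≠ i := fun h => G.irrefl (h ▸ hj.2)
        exact ⟨hj.2, by rw [hy0ne j hji]; exact hj.1⟩) hy0i
    set yB : V → Bool := fun v => decide (v ∈ B) with hyB
    have hmid : (fun v => if v ∈ L1 then false else y0 v) = yB := by
      funext v
      by_cases hvi : v = i
      · have hiL1 : i ∉ L1 := by rw [hL1mem]; rintro ⟨_, h⟩; exact G.irrefl h
        subst hvi
        simp [hiL1, hy0i, hyB, hiB]
      · by_cases hvL : v ∈ L1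
        · rw [hL1mem] at hvL
          have : v ∉ B := by rw [hBmem]; rintro (rfl | ⟨_, h⟩); exact hvi rfl; exact h hvL.2
          simp [hL1mem, hvL, hyB, this]
        · rw [hL1mem] at hvL
          push_neg at hvL
          have h1 : (if v ∈ L1 then false else y0 v) = x v := by
            rw [if_neg (by rw [hL1mem]; exact fun h => (hvL h.1) h.2), hy0ne v hvi]
          rw [h1]
          by_cases hxv : x v = true
          · have : v ∈ B := (hBmem v).mpr (Or.inr ⟨hxv, hvL hxv⟩)
            simp [hyB, this, hxv]
          · have hxvf : x v = false := by simpa using hxv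
            have : v ∉ B := by
              rw [hBmem]; rintro (rfl | ⟨h, _⟩); exact hvi rfl; simp [h] at hxvf
            simp [hyB, this, hxvf]
    rw [hmid] at path1
    set L2 : List V := (M \ B).toList with hL2
    have hL2mem : ∀ v, v ∈ L2 ↔ v ∈ M ∧ v ∉ B := by
      intro v; simp [hL2, Finset.mem_toList, Finset.mem_sdiff]
    have path2 := onPath G i L2 yB (Finset.nodup_toList _)
      (fun j hj => by
        rw [hL2mem] at hj
        refine ⟨fun h => hj.2 (h ▸ hiB), by simp [hyB, hj.2], fun k hadj => ?_⟩
        have hkM : k ∉ M := fun hk => hMind j hj.1 k hk hadj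
        exact ⟨by simp [hyB]; exact fun hk => hkM (hBM hk), fun hk => hkM ((hL2mem k).mp hk).1⟩)
    have hend : (fun v => if v ∈ L2 then true else yB v) = x₁ := by
      funext v
      by_cases hv : v ∈ L2
      · rw [hL2mem] at hv; simp [hL2mem, hv, hx₁def, hv.1]
      · rw [hL2mem] at hv
        push_neg at hv
        rw [if_neg (by rw [hL2mem]; exact fun h => h.2 (hv h.1))]
        by_cases hvB : v ∈ B
        · simp [hyB, hvB, hx₁def, hBM hvB]
        · have : v ∉ M := fun h => hvB (hv h)
          simp [hyB, hvB, hx₁def, this]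
    rw [hend] at path2
    exact path1.trans path2
  · -- monotonicity
    intro v hv1 hv2
    refine hBsub v ((hBmem v).mpr (Or.inr ⟨hv2, fun hadj => ?_⟩))
    have := hNi v hadj
    simp [hv1] at this
  · -- measure decrease
    apply Finset.card_lt_card
    constructor
    · intro v hv
      simp only [Finset.mem_filter, Finset.mem_univ, true_and] at hv ⊢
      refine ⟨hv.1, ?_⟩
      have hvM : v ∉ M := (hx₁false v).mp hv.2
      by_contra hxv
      simp only [Bool.not_eq_false] at hxv
      have hadj : ¬ G.Adj i v := fun h => by have := hNi v h; simp [hv.1] at this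
      exact hvM (hBM ((hBmem v).mpr (Or.inr ⟨hxv, hadj⟩)))
    · intro hsub
      have hi1 : i ∈ Finset.univ.filter (fun v => x' v = true ∧ x v = false) := by
        simp [hx'i, hxi]
      have := hsub hi1
      simp only [Finset.mem_filter, Finset.mem_univ, true_and] at this
      rw [hBsub i hiB] at this
      simp at this

lemma mainAux {V : Type*} [Fintype V] [DecidableEq V] (G : SimpleGraph V)
    (x' : V → Bool) (hx' : BestShotNE G x') :
    ∀ m (x : V → Bool), BestShotNE G x →
    (Finset.univ.filter (fun v => x' v = true ∧ x v = false)).card = m →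
    ∃ (n : ℕ) (f : ℕ → V → Bool),
      f 0 = x ∧ f n = x' ∧
      (∀ k ≤ n, BestShotNE G (f k)) ∧
      (∀ k < n, ∃ i, f k i = false ∧ x' i = true ∧
        Relation.ReflTransGen (Step G i)
          (Function.update (f k) i true) (f (k + 1))) ∧
      (∀ k < n, ∀ v, x' v = true → f k v = true → f (k + 1) v = true) := by
  intro m
  induction m using Nat.strong_induction_on with
  | _ m ih =>
    intro x hx hm
    by_cases hex : ∃ i, x' i = true ∧ x i = false
    · obtain ⟨i, hx'i, hxi⟩ := hex
      obtain ⟨x₁, hx₁NE, hpath, hmono, hx₁i, hlt⟩ := keyStep G x x' hx hx' i hxi hx'i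
      rw [hm] at hlt
      obtain ⟨n, f, hf0, hfn, hfNE, hfstep, hfmono⟩ :=
        ih _ hlt x₁ hx₁NE rfl
      refine ⟨n + 1, fun k => if k = 0 then x else f (k - 1), by simp, by simp [hfn], ?_, ?_, ?_⟩
      · intro k hk
        rcases Nat.eq_zero_or_pos k with rfl | hkpos
        · simpa using hx
        · have : k - 1 ≤ n := by omega
          simp only [Nat.pos_iff_ne_zero.mp hkpos, if_neg (Nat.pos_iff_ne_zero.mp hkpos)]
          exact hfNE _ this
      · intro k hk
        rcases Nat.eq_zero_or_pos k with rfl | hkpos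
        · exact ⟨i, by simpa using hxi, hx'i, by simpa [hf0] using hpath⟩
        · have hk1 : k - 1 < n := by omega
          obtain ⟨j, h1, h2, h3⟩ := hfstep _ hk1
          refine ⟨j, ?_, h2, ?_⟩
          · simpa [Nat.pos_iff_ne_zero.mp hkpos] using h1
          · have e1 : k - 1 + 1 = k := by omega
            simp only [if_neg (Nat.pos_iff_ne_zero.mp hkpos), if_neg (Nat.succ_ne_zero k),
              Nat.add_sub_cancel]
            rw [← e1]
            exact h3
      · intro k hk v hv1 hv2
        rcases Nat.eq_zero_or_pos k with rfl | hkpos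
        · simp only [Nat.add_sub_cancel, if_neg (Nat.one_ne_zero)]
          rw [hf0]
          exact hmono v hv1 (by simpa using hv2)
        · have hk1 : k - 1 < n := by omega
          have e1 : k - 1 + 1 = k := by omega
          simp only [if_neg (Nat.pos_iff_ne_zero.mp hkpos), if_neg (Nat.succ_ne_zero k),
            Nat.add_sub_cancel] at hv2 ⊢
          rw [← e1] at hv2 ⊢
          exact hfmono _ hk1 v hv1 (by simpa using hv2)
    · -- x = x'
      push_neg at hex
      have hsub : ∀ v, x' v = true → x v = true := by
        intro v hv
        by_contra h
        simp only [Bool.not_eq_true] at h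
        exact absurd h (by simpa [hv] using hex v)
      have hxx : x = x' := by
        funext v
        by_cases hv : x' v = true
        · rw [hv, hsub v hv]
        · simp only [Bool.not_eq_true] at hv
          rw [hv]
          by_contra hxv
          simp only [Bool.not_eq_false] at hxv
          -- x v = true but x' v = false: x' has a true neighbor u of v, then x u = true, contra
          have : ¬ ∀ j, G.Adj v j → x' j = false := fun h => by
            simp [(hx' v).mpr h] at hv
          push_neg at this
          obtain ⟨u, hadj, hu⟩ := this
          simp only [Bool.not_eq_false] at hu
          have hxu : x u = true := hsub u hu
          have := (hx v).mp hxv u hadj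
          simp [hxu] at this
      exact ⟨0, fun _ => x, rfl, hxx, fun k _ => hx, by omega, by omega⟩

/-- Any Nash equilibrium `x'` is reachable from any Nash equilibrium `x` by a
finite sequence of Nash equilibria, each obtained from the previous one by
flipping from 0 to 1 a vertex `i` that plays 1 in `x'`, followed by best
response dynamics; moreover 1-players of `x'` that have been switched on are
never switched off in subsequent steps. -/
theorem reachability_between_equilibria
    {V : Type*} [Fintype V] [DecidableEq V] (G : SimpleGraph V)
    (x x' : V → Bool) (hx : BestShotNE G x) (hx' : BestShotNE G x') :
    ∃ (n : ℕ) (f : ℕ → V → Bool),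
      f 0 = x ∧ f n = x' ∧
      (∀ k ≤ n, BestShotNE G (f k)) ∧
      (∀ k < n, ∃ i, f k i = false ∧ x' i = true ∧
        Relation.ReflTransGen (Step G i)
          (Function.update (f k) i true) (f (k + 1))) ∧
      (∀ k < n, ∀ v, x' v = true → f k v = true → f (k + 1) v = true) := by
  obtain ⟨n, f, h1, h2, h3, h4, h5⟩ := mainAux G x' hx' _ x hx rfl
  exact ⟨n, f, h1, h2, h3, h4, h5⟩
end

section
/- The Markov chain on the set Ω of Nash equilibria of the best shot game, defined by picking uniformly at random a vertex playing 0, flipping it to 1, and running best response dynamics to a new Nash equilibrium, is irreducible: every Nash equilibrium is reachable from every other with positive probability in finitely many steps. -/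
/-- One step of the planner's Markov chain on Nash equilibria: flip some
0-player `i` to 1, run best response dynamics, reach a new Nash equilibrium. -/
def NETrans {V : Type*} [DecidableEq V] (G : SimpleGraph V)
    (x y : V → Bool) : Prop :=
  ∃ i, x i = false ∧
    Relation.ReflTransGen (Step G i) (Function.update x i true) y ∧
    BestShotNE G y

/-!
Let `x ≠ y` be Nash equilibria and pick `i` playing 1 in `y` and 0 in `x`. After `i` switches
on, its neighbours are the only unsatisfied 1-players; letting them switch off and then letting
every uncovered 0-player switch on reaches an equilibrium `w` in which `i` and every 1-player of
`x` outside the neighbourhood of `i` still play 1. As the 1-players of `y` are independent, `w`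
shares strictly more 1-players with `y` than `x` does. An equilibrium whose 1-players contain
those of `y` is `y` itself (a maximal independent set contains no other dominating set), so
finitely many transitions lead from `x` to `y`.
-/

open Finset Function Relation

theorem Relation.exists_reflTransGen_of_descent {α : Type*} {r : α → α → Prop}
    {P Q : α → Prop} (f : α → ℕ) (h : ∀ a, P a → Q a ∨ ∃ b, r a b ∧ P b ∧ f b < f a)
    (a : α) (ha : P a) : ∃ b, ReflTransGen r a b ∧ P b ∧ Q b := by
  induction a using (measure f).wf.induction with
  | h a ih =>
    rcases h a ha with hq | ⟨b, hab, hb, hlt⟩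
    · exact ⟨a, .refl, ha, hq⟩
    · obtain ⟨c, hbc, hc, hqc⟩ := ih b hlt hb
      exact ⟨c, .head hab hbc, hc, hqc⟩

theorem card_filter_update_not_lt {V : Type*} [Fintype V] [DecidableEq V]
    {z : V → Bool} {j : V} {b : Bool} (hj : z j = b) :
    #{v | update z j (!b) v = b} < #{v | z v = b} := by
  have herase :
      ({v | update z j (!b) v = b} : Finset V) = ({v | z v = b} : Finset V).erase j := by
    ext v
    rcases eq_or_ne v j with rfl | hvj <;> simp [*]
  rw [herase]
  exact card_erase_lt_of_mem (by simpa using hj)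

section Graph

variable {V : Type*} {G : SimpleGraph V}

theorem IsIndep.eq_of_isDom_subset {S T : Set V} (hT : IsIndep G T) (hS : IsDom G S) (hST : S ⊆ T) :
    S = T := by
  refine hST.antisymm fun v hvT ↦ ?_
  by_contra hvS
  obtain ⟨u, huS, hvu⟩ := hS v hvS
  exact hT hvT (hST huS) hvu

theorem IsIndep.insert_of_not_adj {S : Set V} {v : V} (hS : IsIndep G S)
    (hv : ∀ u ∈ S, ¬ G.Adj v u) : IsIndep G (insert v S) := by
  rintro a (rfl | ha) b (rfl | hb) hab
  · exact G.irrefl hab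
  · exact hv b hb hab
  · exact hv a ha hab.symm
  · exact hS ha hb hab

theorem IsIndep.insert_sdiff_neighborSet {S : Set V} (v : V) (hS : IsIndep G S) :
    IsIndep G (insert v S \ G.neighborSet v) := by
  rintro a ⟨rfl | ha, hav⟩ b ⟨rfl | hb, hbv⟩ hab
  · exact G.irrefl hab
  · exact hbv hab
  · exact hav hab.symm
  · exact hS ha hb hab

theorem bestShotNE_iff {x : V → Bool} :
    BestShotNE G x ↔ IsIndep G {v | x v = true} ∧ IsDom G {v | x v = true} := by
  constructor
  · intro hx
    refine ⟨fun a ha b (hb : x b = true) hab ↦ by simpa [hb] using (hx a).1 ha b hab,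
      fun v hv ↦ ?_⟩
    by_contra! h
    exact hv ((hx v).2 fun j hj ↦ by simpa using fun hj' ↦ h j hj' hj)
  · rintro ⟨hind, hdom⟩ v
    refine ⟨fun hv j hj ↦ ?_, fun hall ↦ ?_⟩
    · by_contra hj'
      exact hind hv (by simpa using hj') hj
    · by_contra hv
      obtain ⟨u, hu, hvu⟩ := hdom v hv
      simp [hall u hvu] at hu

theorem BestShotNE.eq_of_subset {x y : V → Bool} (hx : BestShotNE G x) (hy : BestShotNE G y)
    (hyx : {v | y v = true} ⊆ {v | x v = true}) : x = y := by
  have := (bestShotNE_iff.1 hx).1.eq_of_isDom_subset (bestShotNE_iff.1 hy).2 hyx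
  funext v
  exact Bool.eq_iff_iff.2 (Set.ext_iff.1 this v).symm

end Graph

section Dynamics

variable {V : Type*} [Fintype V] [DecidableEq V] (G : SimpleGraph V) (i : V)

theorem exists_reflTransGen_step_bestShotNE {z : V → Bool} (hz : IsIndep G {v | z v = true})
    (hi : z i = true) : ∃ w, ReflTransGen (Step G i) z w ∧ BestShotNE G w ∧
      {v | z v = true} ⊆ {v | w v = true} := by
  have hstep : ∀ w, IsIndep G {v | w v = true} ∧ {v | z v = true} ⊆ {v | w v = true} →
      BestShotNE G w ∨ ∃ w', Step G i w w' ∧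
        (IsIndep G {v | w' v = true} ∧ {v | z v = true} ⊆ {v | w' v = true}) ∧
        #{v | w' v = false} < #{v | w v = false} := by
    rintro w ⟨hw, hzw⟩
    by_cases hdom : IsDom G {v | w v = true}
    · exact .inl (bestShotNE_iff.2 ⟨hw, hdom⟩)
    obtain ⟨v, hv, hvw⟩ : ∃ v, w v = false ∧ ∀ u, w u = true → ¬ G.Adj v u := by
      simpa [IsDom] using hdom
    have hvi : v ≠ i := by rintro rfl; simpa [hv] using hzw hi
    have hones : {u | update w v true u = true} = insert v {u | w u = true} := by
      ext u
      rcases eq_or_ne u v with rfl | huv <;> simp [*]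
    refine .inr ⟨update w v true, ⟨v, hvi, .inl ⟨hv, fun k hk ↦ ?_⟩, by simp [hv]⟩, ?_, ?_⟩
    · simpa using mt (hvw k) (not_not.2 hk)
    · rw [hones]
      exact ⟨hw.insert_of_not_adj hvw, hzw.trans (Set.subset_insert _ _)⟩
    · simpa using card_filter_update_not_lt hv
  obtain ⟨w, hzw, ⟨-, hsub⟩, hw⟩ := exists_reflTransGen_of_descent _ hstep z ⟨hz, subset_rfl⟩
  exact ⟨w, hzw, hw, hsub⟩

theorem exists_reflTransGen_step_clear_neighborSet {z : V → Bool} (hi : z i = true) :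
    ∃ w, ReflTransGen (Step G i) z w ∧
      {v | w v = true} = {v | z v = true} \ G.neighborSet i := by
  have hstep : ∀ w, {v | z v = true} \ G.neighborSet i ⊆ {v | w v = true} ∧
      {v | w v = true} ⊆ {v | z v = true} →
      (∀ j ∈ G.neighborSet i, w j = false) ∨ ∃ w', Step G i w w' ∧
        ({v | z v = true} \ G.neighborSet i ⊆ {v | w' v = true} ∧
          {v | w' v = true} ⊆ {v | z v = true}) ∧
        #{v | w' v = true} < #{v | w v = true} := by
    rintro w ⟨hlow, hup⟩
    by_cases hclear : ∀ j ∈ G.neighborSet i, w j = false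
    · exact .inl hclear
    obtain ⟨j, hij, hj⟩ : ∃ j, G.Adj i j ∧ w j = true := by simpa using hclear
    have hwi : w i = true := hlow ⟨hi, G.irrefl⟩
    have hones : {u | update w j false u = true} = {u | w u = true} \ {j} := by
      ext u
      rcases eq_or_ne u j with rfl | huj <;> simp [*]
    refine .inr ⟨update w j false, ⟨j, (G.ne_of_adj hij).symm, .inr ⟨hj, i, hij.symm, hwi⟩,
      by simp [hj]⟩, ?_, ?_⟩
    · rw [hones]
      refine ⟨fun v hv ↦ ⟨hlow hv, ?_⟩, Set.sdiff_subset.trans hup⟩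
      rintro rfl
      exact hv.2 hij
    · simpa using card_filter_update_not_lt hj
  obtain ⟨w, hzw, ⟨hlow, hup⟩, hclear⟩ :=
    exists_reflTransGen_of_descent _ hstep z ⟨Set.sdiff_subset, subset_rfl⟩
  exact ⟨w, hzw, hlow.antisymm' fun v hv ↦ ⟨hup hv, fun hiv ↦ by simp [hclear v hiv] at hv⟩⟩

end Dynamics

theorem NETrans.bestShotNE_right {V : Type*} [DecidableEq V] {G : SimpleGraph V}
    {x w : V → Bool} (h : NETrans G x w) : BestShotNE G w :=
  h.choose_spec.2.2

theorem exists_netrans_of_eq_false {V : Type*} [Fintype V] [DecidableEq V]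
    {G : SimpleGraph V} {x : V → Bool} (hx : BestShotNE G x) {i : V} (hi : x i = false) :
    ∃ w, NETrans G x w ∧ insert i {v | x v = true} \ G.neighborSet i ⊆ {v | w v = true} := by
  obtain ⟨z, hxz, hz⟩ := exists_reflTransGen_step_clear_neighborSet G i (update_self i true x)
  have hones : {v | update x i true v = true} = insert i {v | x v = true} := by
    ext v
    rcases eq_or_ne v i with rfl | hvi <;> simp [*]
  rw [hones] at hz
  have hzi : z i = true := (Set.ext_iff.1 hz i).2 ⟨Set.mem_insert i _, G.irrefl⟩
  obtain ⟨w, hzw, hw, hsub⟩ := exists_reflTransGen_step_bestShotNE G i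
    (hz ▸ (bestShotNE_iff.1 hx).1.insert_sdiff_neighborSet i) hzi
  exact ⟨w, ⟨i, hi, hxz.trans hzw, hw⟩, hz ▸ hsub⟩

theorem exists_netrans_card_lt {V : Type*} [Fintype V] [DecidableEq V] {G : SimpleGraph V}
    {x y : V → Bool} (hx : BestShotNE G x) (hy : BestShotNE G y)
    (hyx : ¬ {v | y v = true} ⊆ {v | x v = true}) :
    ∃ w, NETrans G x w ∧ #{v | y v = true ∧ w v = false} < #{v | y v = true ∧ x v = false} := by
  obtain ⟨i, hyi, hxi⟩ : ∃ i, y i = true ∧ x i = false := by simpa [Set.not_subset] using hyx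
  obtain ⟨w, hxw, hsub⟩ := exists_netrans_of_eq_false hx hxi
  have hwi : w i = true := hsub ⟨Set.mem_insert i _, G.irrefl⟩
  refine ⟨w, hxw, card_lt_card <|
    (ssubset_iff_of_subset ?_).2 ⟨i, by simp [hyi, hxi], by simp [hwi]⟩⟩
  intro v
  simp only [mem_filter, mem_univ, true_and, and_imp]
  refine fun hyv hwv ↦ ⟨hyv, ?_⟩
  by_contra hxv
  have hiv : ¬ G.Adj i v := (bestShotNE_iff.1 hy).1 hyi hyv
  simpa [hwv] using hsub ⟨Set.mem_insert_of_mem i (by simpa using hxv), hiv⟩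

theorem markov_chain_irreducible_general
    {V : Type*} [Fintype V] [DecidableEq V] (G : SimpleGraph V)
    (x y : V → Bool) (hx : BestShotNE G x) (hy : BestShotNE G y) :
    Relation.ReflTransGen (NETrans G) x y := by
  have hstep : ∀ a, BestShotNE G a → a = y ∨ ∃ w, NETrans G a w ∧ BestShotNE G w ∧
      #{v | y v = true ∧ w v = false} < #{v | y v = true ∧ a v = false} := by
    intro a ha
    by_cases hya : {v | y v = true} ⊆ {v | a v = true}
    · exact .inl (BestShotNE.eq_of_subset ha hy hya)
    obtain ⟨w, haw, hlt⟩ := exists_netrans_card_lt ha hy hya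
    exact .inr ⟨w, haw, haw.bestShotNE_right, hlt⟩
  obtain ⟨z, hxz, -, rfl⟩ := exists_reflTransGen_of_descent _ hstep x hx
  exact hxz

/-- The Markov chain on Nash equilibria (pick a 0-player uniformly at random,
flip it to 1, run best responses) is irreducible: every Nash equilibrium is
reachable from every other in finitely many steps (each of which has positive
probability). -/
theorem markov_chain_irreducible
    {V : Type*} [Fintype V] [DecidableEq V] (G : SimpleGraph V)
    (hE : ∃ a b, G.Adj a b)
    (x y : V → Bool) (hx : BestShotNE G x) (hy : BestShotNE G y) :
    Relation.ReflTransGen (NETrans G) x y :=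
  markov_chain_irreducible_general G x y hx hy
end

section
/- If x is a Nash equilibrium and i plays 1 in x, then flipping x i from 1 to 0 creates at least one unsatisfied vertex (namely i itself), and any vertex that becomes newly unsatisfied lies in N¹(i); after each such neighbor best-responds (flipping to 1), all vertices except possibly i are satisfied. -/
section Aux

variable {V : Type*} [Fintype V] [DecidableEq V] (G : SimpleGraph V) (x : V → Bool) (i : V)

/-- Potentially unsatisfied neighbors of `i` after the flip. -/
def Sset : Set V := {j | G.Adj i j ∧ ∀ k, G.Adj j k → k ≠ i → x k = false}

open Classical in
/-- The profile where `i` has been flipped to 0 and vertices of `T` to 1. -/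
noncomputable def prof (T : Set V) : V → Bool :=
  fun v => if v ∈ T then true else if v = i then false else x v

/-- The currently unsatisfied vertices (other than `i`). -/
def Uset (T : Set V) : Set V :=
  {j | j ∈ Sset G x i ∧ j ∉ T ∧ ∀ t ∈ T, ¬ G.Adj j t}

variable {G x i}

lemma prof_mem {T : Set V} {v : V} (h : v ∈ T) : prof x i T v = true := by
  simp [prof, h]

lemma prof_i {T : Set V} (h : i ∉ T) : prof x i T i = false := by
  simp [prof, h]

lemma prof_other {T : Set V} {v : V} (h : v ∉ T) (h' : v ≠ i) :
    prof x i T v = x v := by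
  simp [prof, h, h']

variable (hx : BestShotNE G x) (hi : x i = true)
include hx hi

lemma nbr_false {k : V} (h : G.Adj i k) : x k = false := (hx i).mp hi k h

lemma i_notMem {T : Set V} (hT : T ⊆ Sset G x i) : i ∉ T := by
  intro h
  exact G.irrefl (hT h).1

/-- Characterization of unsatisfied vertices (other than `i`) in `prof T`. -/
lemma unsat_char {T : Set V} (hT : T ⊆ Sset G x i)
    (hind : ∀ a ∈ T, ∀ b ∈ T, ¬ G.Adj a b) {j : V} (hj : j ≠ i) :
    Unsat G (prof x i T) j ↔ j ∈ Uset G x i T := by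
  have hiT : i ∉ T := i_notMem hx hi hT
  constructor
  · intro h
    by_cases hjT : j ∈ T
    · -- j ∈ T is satisfied: it plays 1 and all neighbors play 0
      exfalso
      have hjS := hT hjT
      have hnb : ∀ k, G.Adj j k → prof x i T k = false := by
        intro k hk
        by_cases hk' : k = i
        · subst hk'; exact prof_i hiT
        · have hkT : k ∉ T := fun hkT => hind j hjT k hkT hk
          rw [prof_other hkT hk']
          exact hjS.2 k hk hk'
      rcases h with ⟨h1, _⟩ | ⟨h1, k, hk, hk1⟩
      · rw [prof_mem hjT] at h1; exact Bool.true_eq_false ▸ (by simp at h1)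
      · rw [hnb k hk] at hk1; simp at hk1
    · -- j ∉ T
      have hxj : prof x i T j = x j := prof_other hjT hj
      rcases h with ⟨h1, h2⟩ | ⟨h1, k, hk, hk1⟩
      · -- j plays 0, all neighbors 0
        have hadj : G.Adj i j := by
          by_contra hadj
          -- then j was already unsatisfied in x, contradicting NE
          have : x j = true := by
            apply (hx j).mpr
            intro k hk
            have hki : k ≠ i := fun h => hadj (h ▸ hk.symm)
            have hkT : k ∉ T := fun hkT => by
              have := h2 k hk; rw [prof_mem hkT] at this; simp at this
            have := h2 k hk; rwa [prof_other hkT hki] at this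
          rw [hxj] at h1; rw [h1] at this; simp at this
        refine ⟨⟨hadj, ?_⟩, hjT, ?_⟩
        · intro k hk hki
          have hkT : k ∉ T := fun hkT => by
            have := h2 k hk; rw [prof_mem hkT] at this; simp at this
          have := h2 k hk; rwa [prof_other hkT hki] at this
        · intro t htT hadjt
          have := h2 t hadjt; rw [prof_mem htT] at this; simp at this
      · -- j plays 1 with a 1-neighbor: impossible
        exfalso
        rw [hxj] at h1
        have hki : k ≠ i := by
          intro h; subst h; rw [prof_i hiT] at hk1; simp at hk1
        by_cases hkT : k ∈ T
        · -- k ∈ T ⊆ S but has true neighbor j ≠ i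
          have := (hT hkT).2 j hk.symm hj
          rw [this] at h1; simp at h1
        · have := (hx j).mp h1 k hk
          rw [prof_other hkT hki, this] at hk1; simp at hk1
  · intro ⟨hjS, hjT, hjn⟩
    left
    refine ⟨by rw [prof_other hjT hj]; exact nbr_false hx hi hjS.1, ?_⟩
    intro k hk
    by_cases hki : k = i
    · subst hki; exact prof_i hiT
    · have hkT : k ∉ T := fun hkT => hjn k hkT hk
      rw [prof_other hkT hki]
      exact hjS.2 k hk hki

/-- Main induction: from `prof T` we can reach a profile where everyone
except possibly `i` is satisfied. -/
lemma resolve : ∀ n (T : Set V), T ⊆ Sset G x i →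
    (∀ a ∈ T, ∀ b ∈ T, ¬ G.Adj a b) → (Uset G x i T).ncard ≤ n →
    ∃ z, Relation.ReflTransGen (Step G i) (prof x i T) z ∧
      ∀ j, j ≠ i → ¬ Unsat G z j := by
  intro n
  induction n with
  | zero =>
    intro T hT hind hcard
    refine ⟨prof x i T, Relation.ReflTransGen.refl, ?_⟩
    intro j hj hun
    have hmem := (unsat_char hx hi hT hind hj).mp hun
    have : (Uset G x i T).ncard ≠ 0 :=
      Set.ncard_ne_zero_of_mem hmem (Set.toFinite _)
    omega
  | succ n ih =>
    intro T hT hind hcard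
    by_cases hne : (Uset G x i T).Nonempty
    · obtain ⟨j, hjU⟩ := hne
      obtain ⟨hjS, hjT, hjn⟩ := hjU
      have hji : j ≠ i := fun h => G.irrefl (h ▸ hjS.1)
      set T' := insert j T with hT'
      have hT'S : T' ⊆ Sset G x i := by
        intro a ha
        rcases ha with rfl | ha
        · exact hjS
        · exact hT ha
      have hind' : ∀ a ∈ T', ∀ b ∈ T', ¬ G.Adj a b := by
        intro a ha b hb hab
        rcases ha with rfl | ha <;> rcases hb with rfl | hb
        · exact G.irrefl hab
        · exact hjn b hb hab
        · exact hjn a ha hab.symm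
        · exact hind a ha b hb hab
      have hsub : Uset G x i T' ⊆ Uset G x i T \ {j} := by
        intro k ⟨hkS, hkT', hkn⟩
        refine ⟨⟨hkS, fun h => hkT' (Set.mem_insert_of_mem _ h),
          fun t ht => hkn t (Set.mem_insert_of_mem _ ht)⟩, ?_⟩
        intro h
        exact hkT' (h ▸ Set.mem_insert _ _)
      have hlt : (Uset G x i T').ncard < (Uset G x i T).ncard := by
        calc (Uset G x i T').ncard ≤ (Uset G x i T \ {j}).ncard :=
              Set.ncard_le_ncard hsub (Set.toFinite _)
          _ < (Uset G x i T).ncard := by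
              apply Set.ncard_lt_ncard _ (Set.toFinite _)
              constructor
              · exact Set.diff_subset
              · intro hsub'
                exact (hsub' ⟨hjS, hjT, hjn⟩).2 rfl
      obtain ⟨z, hz1, hz2⟩ := ih T' hT'S hind' (by omega)
      refine ⟨z, Relation.ReflTransGen.head ?_ hz1, hz2⟩
      refine ⟨j, hji, (unsat_char hx hi hT hind hji).mpr ⟨hjS, hjT, hjn⟩, ?_⟩
      have hjf : prof x i T j = false := by
        rw [prof_other hjT hji]; exact nbr_false hx hi hjS.1
      funext v
      by_cases hv : v = j
      · subst hv
        rw [Function.update_self, hjf, prof_mem (Set.mem_insert _ _)]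
        rfl
      · rw [Function.update_of_ne hv]
        by_cases hvT : v ∈ T
        · rw [prof_mem hvT, prof_mem (Set.mem_insert_of_mem _ hvT)]
        · have hvT' : v ∉ T' := by
            intro h; rcases h with rfl | h; exact hv rfl; exact hvT h
          by_cases hvi : v = i
          · subst hvi
            rw [prof_i (i_notMem hx hi hT), prof_i (i_notMem hx hi hT'S)]
          · rw [prof_other hvT hvi, prof_other hvT' hvi]
    · refine ⟨prof x i T, Relation.ReflTransGen.refl, ?_⟩
      intro j hj hun
      exact hne ⟨j, (unsat_char hx hi hT hind hj).mp hun⟩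

end Aux

/-- Flipping a 1-player `i` to 0 in a Nash equilibrium makes `i` itself
unsatisfied; every other unsatisfied vertex is a neighbor of `i`; and there is
a sequence of best responses of such neighbors after which every vertex except
possibly `i` is satisfied. -/
theorem flip_one_to_zero_local_resolution
    {V : Type*} [Fintype V] [DecidableEq V] (G : SimpleGraph V)
    (x : V → Bool) (hx : BestShotNE G x) (i : V) (hi : x i = true) :
    Unsat G (Function.update x i false) i ∧
    (∀ j, j ≠ i → Unsat G (Function.update x i false) j → G.Adj i j) ∧
    (∃ z, Relation.ReflTransGen (Step G i) (Function.update x i false) z ∧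
      ∀ j, j ≠ i → ¬ Unsat G z j) := by
  have hnbr : ∀ k, G.Adj i k → x k = false := (hx i).mp hi
  have hprof : Function.update x i false = prof x i (∅ : Set V) := by
    funext v
    by_cases hv : v = i
    · subst hv; rw [Function.update_self, prof_i (by simp)]
    · rw [Function.update_of_ne hv, prof_other (by simp) hv]
  refine ⟨?_, ?_, ?_⟩
  · left
    refine ⟨by rw [Function.update_self], ?_⟩
    intro k hk
    have hki : k ≠ i := fun h => G.irrefl (h ▸ hk)
    rw [Function.update_of_ne hki]
    exact hnbr k hk
  · intro j hj hun
    rw [hprof] at hun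
    have := (unsat_char hx hi (Set.empty_subset _) (by simp) hj).mp hun
    exact this.1.1
  · rw [hprof]
    exact resolve hx hi _ _ (Set.empty_subset _) (by simp) le_rfl
end
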